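/- arXiv:2208.14850 — 2 statements merged into one kernel-verified Lean document; each statement's English description precedes it below -/
import Mathlib

section
/- Let (a_1, …, a_m) and (b_1, …, b_n) be complementary sequences of integers all ≥ 2. Then there exist vectors w_1, …, w_{m+n+1} in ℤ^{m+n} such that, with ⟨x, y⟩ = −∑ x_i y_i: the diagonal values ⟨w_i, w_i⟩ are, in order, −a_1, …, −a_m, −1, −b_n, …, −b_1; ⟨w_i, w_{i+1}⟩ = 1 for 1 ≤ i ≤ m+n; and ⟨w_i, w_j⟩ = 0 whenever |i−j| ≥ 2. (That is, the linear graph (−a_1, …, −a_m, −1, −b_n, …, −b_1) embeds in ℤ^{m+n}.) -/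
/-- Negative continued fraction `[a₁, …, aₙ]⁻`. -/
def ncf : List ℚ → ℚ
  | [] => 0
  | [a] => a
  | a :: b :: l => a - 1 / ncf (b :: l)

/-- Negative continued fraction of a list of integers. -/
def ncfZ (l : List ℤ) : ℚ := ncf (l.map (fun x => (x : ℚ)))

/-- Two sequences of integers, all ≥ 2, are complementary if the reciprocals of their
negative continued fractions sum to 1. -/
def Complementary (a b : List ℤ) : Prop :=
  a ≠ [] ∧ b ≠ [] ∧ (∀ x ∈ a, 2 ≤ x) ∧ (∀ x ∈ b, 2 ≤ x) ∧
    1 / ncfZ a + 1 / ncfZ b = 1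

/-- The standard negative definite bilinear form on `ℤ^N`. -/
def negForm {N : ℕ} (x y : Fin N → ℤ) : ℤ := -∑ i, x i * y i

lemma negForm_comm {N} (x y : Fin N → ℤ) : negForm x y = negForm y x := by
  simp [negForm, mul_comm]

lemma negForm_snoc {M} (u u' : Fin M → ℤ) (s s' : ℤ) :
    negForm (Fin.snoc u s) (Fin.snoc u' s' : Fin (M+1) → ℤ) = negForm u u' - s * s' := by
  simp [negForm, Fin.sum_univ_castSucc]; ring

lemma negForm_neg_left {N} (x y : Fin N → ℤ) : negForm (-x) y = -negForm x y := by
  simp [negForm]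

lemma negForm_neg_right {N} (x y : Fin N → ℤ) : negForm x (-y) = -negForm x y := by
  simp [negForm, mul_neg]

lemma negForm_zero_right {N} (x : Fin N → ℤ) : negForm x (0 : Fin N → ℤ) = 0 := by
  simp [negForm]

lemma negForm_zero_left {N} (x : Fin N → ℤ) : negForm (0 : Fin N → ℤ) x = 0 := by
  simp [negForm]

def Emb (M : ℕ) (c : ℕ → ℤ) : Prop :=
  ∃ w : Fin (M+1) → Fin M → ℤ, ∃ v : Fin M → ℤ,
    (∀ i : Fin (M+1), negForm (w i) (w i) = -c (i:ℕ)) ∧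
    (∀ i j : Fin (M+1), (j:ℕ) = (i:ℕ) + 1 → negForm (w i) (w j) = 1) ∧
    (∀ i j : Fin (M+1), (i:ℕ)+2 ≤ (j:ℕ) ∨ (j:ℕ)+2 ≤ (i:ℕ) → negForm (w i) (w j) = 0) ∧
    negForm v v = -1 ∧
    (∀ i : Fin (M+1), negForm (w i) v =
      if (i:ℕ) = 0 then 1 else if (i:ℕ) = M then -1 else 0)

lemma emb_base : Emb 2 (fun i => ([2,1,2] : List ℤ).getD i 0) :=
  ⟨![![1,1],![0,-1],![-1,1]], ![-1,0], by decide, by decide, by decide, by decide, by decide⟩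


lemma emb_left {M : ℕ} (hM : 1 ≤ M) {c c' : ℕ → ℤ}
    (h0 : c' 0 = c 0 + 1) (hmid : ∀ i, 1 ≤ i → i ≤ M → c' i = c i)
    (hlast : c' (M+1) = 2) (h : Emb M c) : Emb (M+1) c' := by
  obtain ⟨w, v, hD, hA, hO, hvv, hv⟩ := h
  set W : Fin (M+2) → Fin (M+1) → ℤ := fun i =>
    if hi : (i:ℕ) ≤ M then
      Fin.snoc (w ⟨(i:ℕ), by omega⟩) (if (i:ℕ) = 0 then 1 else 0)
    else Fin.snoc (-v) (-1) with hWdef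
  have hW1 : ∀ (i : Fin (M+2)) (hi : (i:ℕ) ≤ M),
      W i = Fin.snoc (w ⟨(i:ℕ), by omega⟩) (if (i:ℕ) = 0 then 1 else 0) := by
    intro i hi; rw [hWdef]; exact dif_pos hi
  have hW2 : ∀ (i : Fin (M+2)), ¬ ((i:ℕ) ≤ M) → W i = Fin.snoc (-v) (-1) := by
    intro i hi; rw [hWdef]; exact dif_neg hi
  refine ⟨W, Fin.snoc (fun _ => 0) (-1), ?_, ?_, ?_, ?_, ?_⟩
  · intro i
    by_cases hi : (i:ℕ) ≤ M
    · rw [hW1 i hi, negForm_snoc]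
      have hd := hD ⟨(i:ℕ), by omega⟩
      simp only [Fin.val_mk] at hd
      rw [hd]
      by_cases h0i : (i:ℕ) = 0
      · rw [if_pos h0i, h0i, h0]; ring
      · rw [if_neg h0i, hmid _ (by omega) hi]; ring
    · rw [hW2 i hi, negForm_snoc, negForm_neg_left, negForm_neg_right,
        show (i:ℕ) = M+1 by omega, hlast, hvv]; ring
  · intro i j hij
    by_cases hj : (j:ℕ) ≤ M
    · have hi : (i:ℕ) ≤ M := by omega
      rw [hW1 i hi, hW1 j hj, negForm_snoc, if_neg (show ¬(j:ℕ) = 0 by omega),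
        mul_zero, sub_zero]
      have := hA ⟨(i:ℕ), by omega⟩ ⟨(j:ℕ), by omega⟩ (by simp [hij])
      simpa using this
    · have hi : (i:ℕ) ≤ M := by omega
      have hiM : (i:ℕ) = M := by omega
      rw [hW1 i hi, hW2 j hj, negForm_snoc, negForm_neg_right,
        if_neg (show ¬(i:ℕ) = 0 by omega)]
      have := hv ⟨(i:ℕ), by omega⟩
      simp only [Fin.val_mk, if_neg (show ¬(i:ℕ) = 0 by omega), if_pos hiM] at this
      rw [this]; ring
  · have key : ∀ i j : Fin (M+2), (i:ℕ)+2 ≤ (j:ℕ) → negForm (W i) (W j) = 0 := by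
      intro i j hij
      by_cases hj : (j:ℕ) ≤ M
      · have hi : (i:ℕ) ≤ M := by omega
        rw [hW1 i hi, hW1 j hj, negForm_snoc, if_neg (show ¬(j:ℕ) = 0 by omega),
          mul_zero, sub_zero]
        have := hO ⟨(i:ℕ), by omega⟩ ⟨(j:ℕ), by omega⟩ (Or.inl (by simpa using hij))
        simpa using this
      · have hi : (i:ℕ) ≤ M := by omega
        rw [hW1 i hi, hW2 j hj, negForm_snoc, negForm_neg_right]
        have hvi := hv ⟨(i:ℕ), by omega⟩
        simp only [Fin.val_mk] at hvi
        by_cases hi0 : (i:ℕ) = 0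
        · rw [if_pos hi0]
          rw [if_pos hi0] at hvi
          rw [hvi]; ring
        · rw [if_neg hi0]
          rw [if_neg hi0, if_neg (show ¬(i:ℕ) = M by omega)] at hvi
          rw [hvi]; ring
    intro i j hij
    rcases hij with h | h
    · exact key i j h
    · rw [negForm_comm]; exact key j i h
  · rw [negForm_snoc]
    have : negForm (fun _ => (0:ℤ)) (fun _ => (0:ℤ) : Fin M → ℤ) = 0 := by simp [negForm]
    rw [this]; ring
  · intro i
    by_cases hi : (i:ℕ) ≤ M
    · rw [hW1 i hi, negForm_snoc]
      have : negForm (w ⟨(i:ℕ), by omega⟩) (fun _ => (0:ℤ) : Fin M → ℤ) = 0 := by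
        simp [negForm]
      rw [this]
      by_cases hi0 : (i:ℕ) = 0
      · rw [if_pos hi0, if_pos hi0]; ring
      · rw [if_neg hi0, if_neg hi0, if_neg (show ¬(i:ℕ) = M+1 by omega)]; ring
    · rw [hW2 i hi, negForm_snoc]
      have : negForm (-v) (fun _ => (0:ℤ) : Fin M → ℤ) = 0 := by simp [negForm]
      rw [this, if_neg (show ¬(i:ℕ) = 0 by omega), if_pos (show (i:ℕ) = M+1 by omega)]
      ring

lemma emb_right {M : ℕ} (hM : 1 ≤ M) {c c' : ℕ → ℤ}
    (h0 : c' 0 = 2) (hmid : ∀ i, 1 ≤ i → i ≤ M → c' i = c (i-1))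
    (hlast : c' (M+1) = c M + 1) (h : Emb M c) : Emb (M+1) c' := by
  obtain ⟨w, v, hD, hA, hO, hvv, hv⟩ := h
  set W : Fin (M+2) → Fin (M+1) → ℤ := fun i =>
    if (i:ℕ) = 0 then Fin.snoc v (-1)
    else if hi : (i:ℕ) ≤ M then Fin.snoc (w ⟨(i:ℕ)-1, by omega⟩) 0
    else Fin.snoc (w ⟨M, by omega⟩) 1 with hWdef
  have hW0 : ∀ (i : Fin (M+2)), (i:ℕ) = 0 → W i = Fin.snoc v (-1) := by
    intro i hi; rw [hWdef]; simp only [hi]; rfl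
  have hW1 : ∀ (i : Fin (M+2)), 1 ≤ (i:ℕ) → (hi : (i:ℕ) ≤ M) →
      W i = Fin.snoc (w ⟨(i:ℕ)-1, by omega⟩) 0 := by
    intro i h1 hi; rw [hWdef]
    simp only [if_neg (show ¬(i:ℕ) = 0 by omega)]
    exact dif_pos hi
  have hW2 : ∀ (i : Fin (M+2)), ¬ ((i:ℕ) ≤ M) → W i = Fin.snoc (w ⟨M, by omega⟩) 1 := by
    intro i hi; rw [hWdef]
    simp only [if_neg (show ¬(i:ℕ) = 0 by omega)]
    exact dif_neg hi
  refine ⟨W, Fin.snoc (fun _ => 0) 1, ?_, ?_, ?_, ?_, ?_⟩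
  · intro i
    by_cases hi0 : (i:ℕ) = 0
    · rw [hW0 i hi0, negForm_snoc, hvv, hi0, h0]; ring
    by_cases hi : (i:ℕ) ≤ M
    · rw [hW1 i (by omega) hi, negForm_snoc]
      have hd := hD ⟨(i:ℕ)-1, by omega⟩
      simp only [Fin.val_mk] at hd
      rw [hd, hmid _ (by omega) hi]; ring
    · rw [hW2 i hi, negForm_snoc]
      have hd := hD ⟨M, by omega⟩
      simp only [Fin.val_mk] at hd
      rw [hd, show (i:ℕ) = M+1 by omega, hlast]; ring
  · intro i j hij
    by_cases hi0 : (i:ℕ) = 0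
    · rw [hW0 i hi0, hW1 j (by omega) (by omega), negForm_snoc, mul_zero, sub_zero,
        negForm_comm]
      have := hv ⟨(j:ℕ)-1, by omega⟩
      simp only [Fin.val_mk, if_pos (show (j:ℕ)-1 = 0 by omega)] at this
      rw [this]
    by_cases hj : (j:ℕ) ≤ M
    · rw [hW1 i (by omega) (by omega), hW1 j (by omega) hj, negForm_snoc, mul_zero,
        sub_zero]
      have := hA ⟨(i:ℕ)-1, by omega⟩ ⟨(j:ℕ)-1, by omega⟩ (by simp; omega)
      simpa using this
    · rw [hW1 i (by omega) (by omega), hW2 j hj, negForm_snoc, zero_mul, sub_zero]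
      have := hA ⟨(i:ℕ)-1, by omega⟩ ⟨M, by omega⟩ (by simp; omega)
      simpa using this
  · have key : ∀ i j : Fin (M+2), (i:ℕ)+2 ≤ (j:ℕ) → negForm (W i) (W j) = 0 := by
      intro i j hij
      by_cases hi0 : (i:ℕ) = 0
      · by_cases hj : (j:ℕ) ≤ M
        · rw [hW0 i hi0, hW1 j (by omega) hj, negForm_snoc, mul_zero, sub_zero,
            negForm_comm]
          have := hv ⟨(j:ℕ)-1, by omega⟩
          simp only [Fin.val_mk, if_neg (show ¬(j:ℕ)-1 = 0 by omega),
            if_neg (show ¬(j:ℕ)-1 = M by omega)] at this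
          rw [this]
        · rw [hW0 i hi0, hW2 j hj, negForm_snoc, negForm_comm]
          have := hv ⟨M, by omega⟩
          simp only [Fin.val_mk, if_neg (show ¬M = 0 by omega), if_pos rfl] at this
          norm_num at this
          rw [this]; ring
      · by_cases hj : (j:ℕ) ≤ M
        · rw [hW1 i (by omega) (by omega), hW1 j (by omega) hj, negForm_snoc, mul_zero,
            sub_zero]
          have := hO ⟨(i:ℕ)-1, by omega⟩ ⟨(j:ℕ)-1, by omega⟩ (Or.inl (by simp; omega))
          simpa using this
        · rw [hW1 i (by omega) (by omega), hW2 j hj, negForm_snoc, zero_mul, sub_zero]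
          have := hO ⟨(i:ℕ)-1, by omega⟩ ⟨M, by omega⟩ (Or.inl (by simp; omega))
          simpa using this
    intro i j hij
    rcases hij with h | h
    · exact key i j h
    · rw [negForm_comm]; exact key j i h
  · rw [negForm_snoc]
    have : negForm (fun _ => (0:ℤ)) (fun _ => (0:ℤ) : Fin M → ℤ) = 0 := by simp [negForm]
    rw [this]; ring
  · intro i
    by_cases hi0 : (i:ℕ) = 0
    · rw [hW0 i hi0, negForm_snoc, if_pos hi0]
      have : negForm v (fun _ => (0:ℤ) : Fin M → ℤ) = 0 := by simp [negForm]
      rw [this]; ring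
    by_cases hi : (i:ℕ) ≤ M
    · rw [hW1 i (by omega) hi, negForm_snoc, if_neg hi0,
        if_neg (show ¬(i:ℕ) = M+1 by omega)]
      have : negForm (w ⟨(i:ℕ)-1, by omega⟩) (fun _ => (0:ℤ) : Fin M → ℤ) = 0 := by
        simp [negForm]
      rw [this]; ring
    · rw [hW2 i hi, negForm_snoc, if_neg hi0, if_pos (show (i:ℕ) = M+1 by omega)]
      have : negForm (w ⟨M, by omega⟩) (fun _ => (0:ℤ) : Fin M → ℤ) = 0 := by
        simp [negForm]
      rw [this]; ring

inductive Comp : List ℤ → List ℤ → Prop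
  | base : Comp [2] [2]
  | left (x : ℤ) (a b : List ℤ) : Comp (x::a) b → Comp ((x+1)::a) (2::b)
  | right (y : ℤ) (a b : List ℤ) : Comp a (y::b) → Comp (2::a) ((y+1)::b)

lemma comp_emb (a b : List ℤ) (h : Comp a b) :
    Emb (a.length + b.length) (fun i => ((a ++ 1 :: b.reverse).getD i 0)) := by
  induction h with
  | base => exact emb_base
  | left x a b h ih =>
    have hlen : ((x+1)::a).length + (2::b).length = (a.length + b.length + 1) + 1 := by
      simp only [List.length_cons]; omega
    rw [hlen]
    have heq : (((x+1)::a) ++ 1 :: (2::b).reverse) =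
        (x+1) :: ((a ++ 1 :: b.reverse) ++ [2]) := by simp
    have hplen : (a ++ 1 :: b.reverse).length = a.length + b.length + 1 := by
      simp only [List.length_append, List.length_cons, List.length_reverse]; omega
    refine emb_left (c := fun i => ((x :: a ++ 1 :: b.reverse).getD i 0))
      (by omega) ?_ ?_ ?_ ?_
    · rw [heq]; simp
    · intro i h1 hi
      obtain ⟨k, rfl⟩ : ∃ k, i = k + 1 := ⟨i - 1, by omega⟩
      rw [heq]
      simp only [List.getD_cons_succ, List.cons_append]
      exact List.getD_append _ _ _ _ (by omega)
    · rw [heq]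
      simp only [List.getD_cons_succ]
      rw [show a.length + b.length + 1 = (a ++ 1 :: b.reverse).length from hplen.symm,
        List.getD_append_right _ _ _ _ (le_refl _)]
      simp
    · have hlen2 : (x::a).length + b.length = a.length + b.length + 1 := by
        simp only [List.length_cons]; omega
      rw [hlen2] at ih
      exact ih
  | right y a b h ih =>
    have hlen : ((2:ℤ)::a).length + ((y+1)::b).length = (a.length + b.length + 1) + 1 := by
      simp only [List.length_cons]; omega
    rw [hlen]
    have heq : (((2:ℤ)::a) ++ 1 :: ((y+1)::b).reverse) =
        2 :: ((a ++ 1 :: b.reverse) ++ [y+1]) := by simp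
    have heqo : (a ++ 1 :: (y::b).reverse) = (a ++ 1 :: b.reverse) ++ [y] := by simp
    have hplen : (a ++ 1 :: b.reverse).length = a.length + b.length + 1 := by
      simp only [List.length_append, List.length_cons, List.length_reverse]; omega
    refine emb_right (c := fun i => (((a ++ 1 :: b.reverse) ++ [y]).getD i 0))
      (by omega) ?_ ?_ ?_ ?_
    · rw [heq]; simp
    · intro i h1 hi
      obtain ⟨k, rfl⟩ : ∃ k, i = k + 1 := ⟨i - 1, by omega⟩
      rw [heq]
      simp only [List.getD_cons_succ, Nat.add_sub_cancel]
      rw [List.getD_append (a ++ 1 :: b.reverse) [y+1] 0 k (by omega),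
        List.getD_append (a ++ 1 :: b.reverse) [y] 0 k (by omega)]
    · rw [heq]
      simp only [List.getD_cons_succ]
      rw [show a.length + b.length + 1 = (a ++ 1 :: b.reverse).length from hplen.symm,
        List.getD_append_right _ _ _ _ (le_refl _),
        List.getD_append_right _ _ _ _ (le_refl _)]
      simp
    · have hlen2 : a.length + (y::b).length = a.length + b.length + 1 := by
        simp only [List.length_cons]; omega
      rw [hlen2, heqo] at ih
      exact ih

lemma ncfZ_singleton (x : ℤ) : ncfZ [x] = x := rfl

lemma ncfZ_cons (x : ℤ) (t : List ℤ) (h : t ≠ []) :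
    ncfZ (x :: t) = x - 1 / ncfZ t := by
  cases t with
  | nil => exact absurd rfl h
  | cons y s => rfl

lemma one_lt_ncfZ : ∀ (l : List ℤ), l ≠ [] → (∀ x ∈ l, 2 ≤ x) → 1 < ncfZ l := by
  intro l
  induction l with
  | nil => intro h; exact absurd rfl h
  | cons x t ih =>
    intro _ h2
    have hx : (2:ℚ) ≤ (x:ℚ) := by exact_mod_cast h2 x (by simp)
    by_cases ht : t = []
    · subst ht; rw [ncfZ_singleton]; linarith
    · rw [ncfZ_cons _ _ ht]
      have h1 := ih ht (fun y hy => h2 y (by simp [hy]))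
      have hpos : (0:ℚ) < ncfZ t := by linarith
      have hlt : 1 / ncfZ t < 1 := by rw [div_lt_one hpos]; linarith
      have hgt : 0 < 1 / ncfZ t := by positivity
      linarith

lemma complementary_comp : ∀ (n : ℕ) (a b : List ℤ), a.length + b.length ≤ n →
    Complementary a b → Comp a b := by
  intro n
  induction n with
  | zero =>
    intro a b hn h
    obtain ⟨ha, -, -, -, -⟩ := h
    cases a with
    | nil => exact absurd rfl ha
    | cons x t => simp at hn
  | succ n ih =>
    rintro a b hn ⟨ha, hb, ha2, hb2, heq⟩
    cases a with
    | nil => exact absurd rfl ha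
    | cons x t =>
    cases b with
    | nil => exact absurd rfl hb
    | cons y s =>
    set α := ncfZ (x::t) with hαdef
    set β := ncfZ (y::s) with hβdef
    have hα : 1 < α := one_lt_ncfZ _ (by simp) ha2
    have hβ : 1 < β := one_lt_ncfZ _ (by simp) hb2
    have hα0 : α ≠ 0 := by linarith
    have hβ0 : β ≠ 0 := by linarith
    have heqf : β + α = α * β := by
      field_simp at heq
      linear_combination heq
    have hx2 : (2:ℚ) ≤ (x:ℚ) := by exact_mod_cast ha2 x (by simp)
    have hy2 : (2:ℚ) ≤ (y:ℚ) := by exact_mod_cast hb2 y (by simp)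
    rcases lt_trichotomy α 2 with hlt | hegal | hgt
    · -- α < 2, so β > 2 : mirror case
      have hβgt : 2 < β := by nlinarith
      -- t ≠ []
      have ht : t ≠ [] := by
        intro h; subst h
        rw [hαdef, ncfZ_singleton] at hlt
        linarith
      -- x = 2
      have hαx : α = x - 1/ncfZ t := ncfZ_cons x t ht
      have hγ : 1 < ncfZ t := one_lt_ncfZ t ht (fun z hz => ha2 z (by simp [hz]))
      have hx : x = 2 := by
        have h1 : (x:ℚ) - 1 < α := by
          have : 1 / ncfZ t < 1 := by rw [div_lt_one (by linarith)]; linarith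
          rw [hαx]; linarith
        have : (x:ℚ) < 3 := by linarith
        have hx3 : x < 3 := by exact_mod_cast this
        have hx2' : 2 ≤ x := ha2 x (by simp)
        omega
      -- y ≥ 3
      have hy3 : 3 ≤ y := by
        by_cases hs : s = []
        · subst hs
          rw [hβdef, ncfZ_singleton] at hβgt
          have : (2:ℚ) < y := hβgt
          have : 2 < y := by exact_mod_cast this
          omega
        · have hβy : β = y - 1/ncfZ s := ncfZ_cons y s hs
          have hδ : 1 < ncfZ s := one_lt_ncfZ s hs (fun z hz => hb2 z (by simp [hz]))
          have : 0 < 1 / ncfZ s := by positivity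
          have : (2:ℚ) < y := by rw [hβy] at hβgt; linarith
          have : 2 < y := by exact_mod_cast this
          omega
      -- new pair (t, (y-1)::s)
      have hnc : Complementary t ((y-1)::s) := by
        refine ⟨ht, by simp, fun z hz => ha2 z (by simp [hz]), ?_, ?_⟩
        · intro z hz
          rcases List.mem_cons.1 hz with rfl | hz
          · omega
          · exact hb2 z (by simp [hz])
        · have hys : ncfZ ((y-1)::s) = β - 1 := by
            by_cases hs : s = []
            · subst hs
              rw [ncfZ_singleton, hβdef, ncfZ_singleton]
              push_cast; ring
            · rw [ncfZ_cons _ _ hs, hβdef, ncfZ_cons _ _ hs]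
              push_cast; ring
          rw [hys]
          have hαt : α = x - 1/ncfZ t := hαx
          have hxq : (x:ℚ) = 2 := by exact_mod_cast hx
          have hα' : α = 2 - 1/ncfZ t := by rw [hαt, hxq]
          have hnct0 : ncfZ t ≠ 0 := by linarith
          have hβ10 : β - 1 ≠ 0 := by linarith
          have hstep : 1 / ncfZ t = 2 - α := by rw [hα']; ring
          rw [hys] at *
          rw [show (1:ℚ) / ncfZ t + 1 / (β - 1) = (2 - α) + 1/(β-1) from by rw [hstep]]
          have hinv : 1 / (β - 1) = α - 1 := by
            rw [div_eq_iff hβ10]; linear_combination heqf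
          rw [hinv]; ring
      have hcomp := ih t ((y-1)::s) (by simp at hn ⊢; omega) hnc
      have := Comp.right (y-1) t s hcomp
      rw [show y - 1 + 1 = y from by ring] at this
      rw [show ((2:ℤ)::t) = (x::t) from by rw [hx]] at this
      exact this
    · -- α = 2 : base case
      have hβ2 : β = 2 := by
        rw [hegal] at heqf; linarith
      have ht : t = [] := by
        by_contra ht
        have hαx : α = x - 1/ncfZ t := ncfZ_cons x t ht
        have hγ : 1 < ncfZ t := one_lt_ncfZ t ht (fun z hz => ha2 z (by simp [hz]))
        have h1 : (x:ℚ) - 1 < α := by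
          have : 1 / ncfZ t < 1 := by rw [div_lt_one (by linarith)]; linarith
          rw [hαx]; linarith
        have h2 : α < (x:ℚ) := by
          have : 0 < 1 / ncfZ t := by positivity
          rw [hαx]; linarith
        rw [hegal] at h1 h2
        have : x < 3 := by exact_mod_cast (by linarith : (x:ℚ) < 3)
        have : 2 < x := by exact_mod_cast h2
        omega
      have hs : s = [] := by
        by_contra hs
        have hβy : β = y - 1/ncfZ s := ncfZ_cons y s hs
        have hδ : 1 < ncfZ s := one_lt_ncfZ s hs (fun z hz => hb2 z (by simp [hz]))
        have h1 : (y:ℚ) - 1 < β := by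
          have : 1 / ncfZ s < 1 := by rw [div_lt_one (by linarith)]; linarith
          rw [hβy]; linarith
        have h2 : β < (y:ℚ) := by
          have : 0 < 1 / ncfZ s := by positivity
          rw [hβy]; linarith
        rw [hβ2] at h1 h2
        have : y < 3 := by exact_mod_cast (by linarith : (y:ℚ) < 3)
        have : 2 < y := by exact_mod_cast h2
        omega
      subst ht; subst hs
      have hxv : x = 2 := by
        rw [hαdef, ncfZ_singleton] at hegal
        exact_mod_cast hegal
      have hyv : y = 2 := by
        rw [hβdef, ncfZ_singleton] at hβ2
        exact_mod_cast hβ2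
      subst hxv; subst hyv
      exact Comp.base
    · -- α > 2 : y = 2, strip from b
      have hβlt : β < 2 := by nlinarith
      have hs : s ≠ [] := by
        intro h; subst h
        rw [hβdef, ncfZ_singleton] at hβlt
        linarith
      have hβy : β = y - 1/ncfZ s := ncfZ_cons y s hs
      have hδ : 1 < ncfZ s := one_lt_ncfZ s hs (fun z hz => hb2 z (by simp [hz]))
      have hy : y = 2 := by
        have h1 : (y:ℚ) - 1 < β := by
          have : 1 / ncfZ s < 1 := by rw [div_lt_one (by linarith)]; linarith
          rw [hβy]; linarith
        have : (y:ℚ) < 3 := by linarith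
        have hy3 : y < 3 := by exact_mod_cast this
        have hy2' : 2 ≤ y := hb2 y (by simp)
        omega
      have hx3 : 3 ≤ x := by
        by_cases ht : t = []
        · subst ht
          rw [hαdef, ncfZ_singleton] at hgt
          have : 2 < x := by exact_mod_cast hgt
          omega
        · have hαx : α = x - 1/ncfZ t := ncfZ_cons x t ht
          have hγ : 1 < ncfZ t := one_lt_ncfZ t ht (fun z hz => ha2 z (by simp [hz]))
          have : 0 < 1 / ncfZ t := by positivity
          have : (2:ℚ) < x := by rw [hαx] at hgt; linarith
          have : 2 < x := by exact_mod_cast this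
          omega
      have hnc : Complementary ((x-1)::t) s := by
        refine ⟨by simp, hs, ?_, fun z hz => hb2 z (by simp [hz]), ?_⟩
        · intro z hz
          rcases List.mem_cons.1 hz with rfl | hz
          · omega
          · exact ha2 z (by simp [hz])
        · have hxs : ncfZ ((x-1)::t) = α - 1 := by
            by_cases ht : t = []
            · subst ht
              rw [ncfZ_singleton, hαdef, ncfZ_singleton]
              push_cast; ring
            · rw [ncfZ_cons _ _ ht, hαdef, ncfZ_cons _ _ ht]
              push_cast; ring
          rw [hxs]
          have hyq : (y:ℚ) = 2 := by exact_mod_cast hy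
          have hβ' : β = 2 - 1/ncfZ s := by rw [hβy, hyq]
          have hncs0 : ncfZ s ≠ 0 := by linarith
          have hα10 : α - 1 ≠ 0 := by linarith
          have hstep : 1 / ncfZ s = 2 - β := by rw [hβ']; ring
          rw [show (1:ℚ) / (α - 1) + 1 / ncfZ s = 1/(α-1) + (2 - β) from by rw [hstep]]
          have hinv : 1 / (α - 1) = β - 1 := by
            rw [div_eq_iff hα10]; linear_combination heqf
          rw [hinv]; ring
      have hcomp := ih ((x-1)::t) s (by simp at hn ⊢; omega) hnc
      have := Comp.left (x-1) t s hcomp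
      rw [show x - 1 + 1 = x from by ring] at this
      rw [show ((2:ℤ)::s) = (y::s) from by rw [hy]] at this
      exact this

theorem linear_graph_with_minus_one_embeds (a b : List ℤ) (h : Complementary a b) :
    ∃ w : Fin (a.length + b.length + 1) → Fin (a.length + b.length) → ℤ,
      (∀ i : Fin (a.length + b.length + 1),
        negForm (w i) (w i) = -((a ++ 1 :: b.reverse).getD (i : ℕ) 0)) ∧
      (∀ i j : Fin (a.length + b.length + 1), (j : ℕ) = (i : ℕ) + 1 →
        negForm (w i) (w j) = 1) ∧
      (∀ i j : Fin (a.length + b.length + 1),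
        (i : ℕ) + 2 ≤ (j : ℕ) ∨ (j : ℕ) + 2 ≤ (i : ℕ) → negForm (w i) (w j) = 0) := by
  have hc := complementary_comp (a.length + b.length) a b (le_refl _) h
  obtain ⟨w, v, hD, hA, hO, -, -⟩ := comp_emb a b hc
  exact ⟨w, hD, hA, hO⟩
end

section
/- For all integers b ≥ 2 and k ≥ 0, the sequences (b, k+2) and ((2)^{[b−2]}, 3, (2)^{[k]}) are complementary; that is, 1/[b, k+2]^- + 1/[2, …, 2, 3, 2, …, 2]^- (with b−2 twos before the 3 and k twos after it) = 1. -/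
lemma ncfZ_eq (l : List ℤ) : ncfZ l = ncf (List.map (fun x : ℤ => (x : ℚ)) l) := by
  simp only [ncfZ]
  congr 1
  induction l with
  | nil => rfl
  | cons a t ih => simp_all

lemma ncf_cons (a : ℚ) (L : List ℚ) (h : L ≠ []) : ncf (a :: L) = a - 1 / ncf L := by
  cases L with
  | nil => exact absurd rfl h
  | cons b l => rfl

lemma ncf_twos (k : ℕ) : ncf (List.replicate (k + 1) (2 : ℚ)) = (k + 2) / (k + 1) := by
  induction k with
  | zero => simp [ncf]
  | succ n ih =>
    rw [List.replicate_succ, ncf_cons _ _ (by simp), ih]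
    have h1 : (n : ℚ) + 1 ≠ 0 := by positivity
    have h2 : (n : ℚ) + 2 ≠ 0 := by positivity
    push_cast
    field_simp
    ring

lemma ncf_three_twos (k : ℕ) :
    ncf ((3 : ℚ) :: List.replicate k (2 : ℚ)) = (2 * k + 3) / (k + 1) := by
  cases k with
  | zero => simp [ncf]
  | succ n =>
    rw [ncf_cons _ _ (by simp), ncf_twos]
    have h1 : (n : ℚ) + 1 ≠ 0 := by positivity
    have h2 : (n : ℚ) + 2 ≠ 0 := by positivity
    push_cast
    field_simp
    ring

lemma ncf_main (m k : ℕ) :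
    ncf (List.replicate m (2 : ℚ) ++ (3 : ℚ) :: List.replicate k (2 : ℚ)) =
      ((2 * k + 3) + m * (k + 2)) / ((k + 1) + m * (k + 2)) := by
  induction m with
  | zero => simpa using ncf_three_twos k
  | succ n ih =>
    rw [List.replicate_succ, List.cons_append, ncf_cons _ _ (by simp), ih]
    have h1 : (0 : ℚ) < (k + 1) + n * (k + 2) := by positivity
    have h2 : (0 : ℚ) < (2 * k + 3) + n * (k + 2) := by positivity
    push_cast
    field_simp
    ring

theorem complementary_b_kplustwo (b : ℕ) (hb : 2 ≤ b) (k : ℕ) :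
    Complementary [(b : ℤ), (k : ℤ) + 2]
      (List.replicate (b - 2) (2 : ℤ) ++ (3 : ℤ) :: List.replicate k 2) := by
  obtain ⟨m, rfl⟩ : ∃ m, b = m + 2 := ⟨b - 2, by omega⟩
  refine ⟨by simp, by simp, ?_, ?_, ?_⟩
  · intro x hx
    simp only [List.mem_cons, List.mem_singleton] at hx
    rcases hx with h | h | h
    · subst h; exact_mod_cast by omega
    · subst h; omega
    · simp at h
  · intro x hx
    simp only [List.mem_append, List.mem_cons, List.mem_replicate] at hx
    rcases hx with ⟨_, rfl⟩ | rfl | ⟨_, rfl⟩ <;> omega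
  · have hm : m + 2 - 2 = m := by omega
    rw [hm]
    rw [ncfZ_eq, ncfZ_eq]
    simp only [List.map_append, List.map_cons, List.map_nil, List.map_replicate,
      Int.cast_add, Int.cast_natCast, Int.cast_ofNat, Int.cast_two, Int.cast_three]
    have e1 : ncf [((m : ℕ) + 2 : ℚ), (k : ℚ) + 2]
        = (((m : ℚ) + 2) * ((k : ℚ) + 2) - 1) / ((k : ℚ) + 2) := by
      rw [show ncf [((m : ℕ) + 2 : ℚ), (k : ℚ) + 2] =
        ((m : ℕ) + 2 : ℚ) - 1 / ((k : ℚ) + 2) from rfl]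
      have h2 : (k : ℚ) + 2 ≠ 0 := by positivity
      have h3 : ((m : ℕ) + 2 : ℚ) = (m : ℚ) + 2 := by norm_cast
      rw [h3]
      field_simp
    have e2 := ncf_main m k
    push_cast
    rw [e1, e2]
    have h1 : (0 : ℚ) < (m + 2) * (k + 2) - 1 := by nlinarith [Nat.cast_nonneg (α := ℚ) m, Nat.cast_nonneg (α := ℚ) k]
    have h2 : (0 : ℚ) < (k + 1) + m * (k + 2) := by positivity
    have h3 : (0 : ℚ) < (2 * k + 3) + m * (k + 2) := by positivity
    have h4 : (0 : ℚ) < (k : ℚ) + 2 := by positivity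
    field_simp
    ring
end
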